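/- Let $p > 1$. For every $\varepsilon > 0$ there exists $c_{\varepsilon} > 0$ such that for all $a, b \ge 0$: $$\frac{1}{p+1}\big[(a+b)^{p+1} - a^{p+1}\big] - a^p b \;\le\; \frac{1+\varepsilon}{2}\, p\, a^{p-1} b^2 + c_{\varepsilon}\, b^{p+1}.$$ -/

import Mathlib

/-!
The left-hand side is `∫₀ᵇ ((a + t) ^ p - a ^ p) dt`, so it is enough to bound the integrand by
`(1 + ε) p a^(p-1) t + C t^p` and integrate (by comparing derivatives). For `t ≤ δ a` the tangent
inequality of the convex function `x ↦ x ^ p` gives `(a + t) ^ p - a ^ p ≤ p (a + t)^(p-1) t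
≤ (1 + δ)^(p-1) p a^(p-1) t`, and `δ` is chosen with `(1 + δ)^(p-1) = 1 + ε`; for `t ≥ δ a`
simply `(a + t) ^ p ≤ (1 + δ⁻¹) ^ p t ^ p`.
-/

open Real Set

theorem rpow_add_sub_rpow_le_mul {p a b : ℝ} (hp : 1 ≤ p) (ha : 0 ≤ a) (hb : 0 ≤ b) :
    (a + b) ^ p - a ^ p ≤ p * (a + b) ^ (p - 1) * b := by
  rcases (add_nonneg ha hb).eq_or_lt with hab | hab
  · obtain ⟨rfl, rfl⟩ : a = 0 ∧ b = 0 := ⟨by linarith, by linarith⟩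
    simp
  -- Bernoulli's inequality for `a / (a + b) = 1 - b / (a + b)`
  have hbern := one_add_mul_self_le_rpow_one_add (s := -(b / (a + b)))
    (by rw [neg_le_neg_iff]; exact div_le_one_of_le₀ (by linarith) hab.le) hp
  have hfrac : 1 + -(b / (a + b)) = a / (a + b) := by field_simp; ring
  rw [hfrac, div_rpow ha hab.le] at hbern
  have hpos : 0 < (a + b) ^ p := rpow_pos_of_pos hab p
  calc (a + b) ^ p - a ^ p = (a + b) ^ p * (1 - a ^ p / (a + b) ^ p) := by field_simp
    _ ≤ (a + b) ^ p * (p * (b / (a + b))) := by gcongr; linarith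
    _ = p * (a + b) ^ (p - 1) * b := by rw [rpow_sub_one hab.ne']; ring

theorem rpow_add_sub_rpow_le_of_le_mul {p δ a b : ℝ} (hp : 1 ≤ p) (hδ : 0 ≤ δ) (ha : 0 ≤ a)
    (hb : 0 ≤ b) (hba : b ≤ δ * a) :
    (a + b) ^ p - a ^ p ≤ (1 + δ) ^ (p - 1) * p * a ^ (p - 1) * b := by
  have hpow : (a + b) ^ (p - 1) ≤ (1 + δ) ^ (p - 1) * a ^ (p - 1) := by
    rw [← mul_rpow (by linarith) ha]
    exact rpow_le_rpow (by linarith) (by linarith) (by linarith)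
  calc (a + b) ^ p - a ^ p ≤ p * (a + b) ^ (p - 1) * b := rpow_add_sub_rpow_le_mul hp ha hb
    _ ≤ p * ((1 + δ) ^ (p - 1) * a ^ (p - 1)) * b := by gcongr
    _ = (1 + δ) ^ (p - 1) * p * a ^ (p - 1) * b := by ring

theorem rpow_add_sub_rpow_le_of_mul_le {p δ a b : ℝ} (hp : 0 ≤ p) (hδ : 0 < δ) (ha : 0 ≤ a)
    (hb : 0 ≤ b) (hab : δ * a ≤ b) :
    (a + b) ^ p - a ^ p ≤ (1 + δ⁻¹) ^ p * b ^ p := by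
  have hle : a + b ≤ (1 + δ⁻¹) * b := by
    have : a ≤ δ⁻¹ * b := by rw [inv_mul_eq_div, le_div_iff₀ hδ]; linarith
    linarith
  calc (a + b) ^ p - a ^ p ≤ (a + b) ^ p := by linarith [rpow_nonneg ha p]
    _ ≤ ((1 + δ⁻¹) * b) ^ p := rpow_le_rpow (by linarith) hle hp
    _ = (1 + δ⁻¹) ^ p * b ^ p := mul_rpow (by positivity) hb

theorem exists_rpow_add_sub_rpow_le {p ε : ℝ} (hp : 1 < p) (hε : 0 < ε) :
    ∃ C > 0, ∀ a b : ℝ, 0 ≤ a → 0 ≤ b →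
      (a + b) ^ p - a ^ p ≤ (1 + ε) * p * a ^ (p - 1) * b + C * b ^ p := by
  set δ := (1 + ε) ^ (p - 1)⁻¹ - 1
  have hδ : 0 < δ := by
    have : 1 < (1 + ε) ^ (p - 1)⁻¹ :=
      one_lt_rpow (by linarith) (inv_pos.mpr (by linarith))
    linarith
  have hδε : (1 + δ) ^ (p - 1) = 1 + ε := by
    rw [add_sub_cancel, rpow_inv_rpow (by linarith) (by linarith)]
  refine ⟨(1 + δ⁻¹) ^ p, by positivity, fun a b ha hb => ?_⟩
  have hsmall : 0 ≤ (1 + ε) * p * a ^ (p - 1) * b := by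
    have := rpow_nonneg ha (p - 1); positivity
  have hlarge : 0 ≤ (1 + δ⁻¹) ^ p * b ^ p := by positivity
  rcases le_total b (δ * a) with hba | hab
  · linarith [hδε ▸ rpow_add_sub_rpow_le_of_le_mul hp.le hδ.le ha hb hba]
  · linarith [rpow_add_sub_rpow_le_of_mul_le (by linarith : (0:ℝ) ≤ p) hδ ha hb hab]

theorem primitive_le_of_rpow_add_sub_rpow_le {p a b K C : ℝ} (hp : 0 ≤ p) (hb : 0 ≤ b)
    (h : ∀ t ∈ Ico 0 b, (a + t) ^ p - a ^ p ≤ K * t + C * t ^ p) :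
    1 / (p + 1) * ((a + b) ^ (p + 1) - a ^ (p + 1)) - a ^ p * b ≤
      K / 2 * b ^ 2 + C / (p + 1) * b ^ (p + 1) := by
  have hp1 : 1 ≤ p + 1 := by linarith
  have hf (t : ℝ) : HasDerivAt (fun t => 1 / (p + 1) * ((a + t) ^ (p + 1) - a ^ (p + 1)) - a ^ p * t)
      ((a + t) ^ p - a ^ p) t := by
    refine ((((hasDerivAt_id' t).const_add a).rpow_const (Or.inr hp1)).sub_const (a ^ (p + 1))
      |>.const_mul (1 / (p + 1)) |>.sub ((hasDerivAt_id' t).const_mul (a ^ p))).congr_deriv ?_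
    rw [add_sub_cancel_right]
    field_simp
  have hg (t : ℝ) : HasDerivAt (fun t => K / 2 * t ^ 2 + C / (p + 1) * t ^ (p + 1))
      (K * t + C * t ^ p) t := by
    refine (((hasDerivAt_pow 2 t).const_mul (K / 2)).add
      ((hasDerivAt_rpow_const (Or.inr hp1)).const_mul (C / (p + 1)))).congr_deriv ?_
    rw [add_sub_cancel_right]
    field_simp
    ring
  refine image_le_of_deriv_right_le_deriv_boundary (a := 0) (b := b)
    (fun x _ => (hf x).continuousAt.continuousWithinAt) (fun x _ => (hf x).hasDerivWithinAt)
    ?_ (fun x _ => (hg x).continuousAt.continuousWithinAt) (fun x _ => (hg x).hasDerivWithinAt)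
    h ⟨hb, le_rfl⟩
  simp [zero_rpow (by linarith : p + 1 ≠ 0)]

theorem stmt_11 (p : ℝ) (hp : 1 < p) :
    ∀ ε : ℝ, 0 < ε → ∃ c > 0, ∀ a b : ℝ, 0 ≤ a → 0 ≤ b →
      (1 / (p + 1)) * ((a + b) ^ (p + 1) - a ^ (p + 1)) - a ^ p * b ≤
        ((1 + ε) / 2) * p * a ^ (p - 1) * b ^ 2 + c * b ^ (p + 1) := by
  intro ε hε
  obtain ⟨C, hC, hfirst⟩ := exists_rpow_add_sub_rpow_le hp hε
  refine ⟨C / (p + 1), by positivity, fun a b ha hb => ?_⟩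
  have hprimitive := primitive_le_of_rpow_add_sub_rpow_le (by linarith) hb
    (fun t ht => hfirst a t ha ht.1)
  convert hprimitive using 2
  ring
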